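/- arXiv:2203.13000 — 3 statements merged into one kernel-verified Lean document; each statement's English description precedes it below -/
import Mathlib

section
/- Let C and D be small categories and F : C ⥤ D a functor. The left Kan extension functor along F on Set-valued functors, Lan_F : (C ⥤ Type) ⥤ (D ⥤ Type) (which on objects sends X : C ⥤ Type to the functor d ↦ colim_{(c, f : F(c) ⟶ d)} X(c)), preserves finite limits if and only if for every object d : D the comma category F ↓ d (the category of costructured arrows CostructuredArrow F d, whose objects are pairs (c, f : F(c) ⟶ d)) is filtered. -/
/-!
Evaluated at `d`, `Lan_F X` is the colimit of `X ∘ π` over `F ↓ d`, where `π : F ↓ d ⥤ C` is the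
projection. If `F ↓ d` is filtered this colimit commutes with finite limits, which gives one
direction. Conversely, take a finite diagram `(cⱼ, fⱼ)` in `F ↓ d` and the corepresentables
`C(cⱼ, -)`. An element of the colimit over `F ↓ d` of `C(c, π -)` determines a morphism
`F c ⟶ d`, so the family `(fⱼ)` is an element of `lim_j Lan_F C(cⱼ, -) (d)`. If `Lan_F` preserves
this limit, the family lifts to `Lan_F (lim_j C(cⱼ, -)) (d)`, and a representative of the lift is
an object `(c, f)` of `F ↓ d` together with a cocone `gⱼ : cⱼ ⟶ c` satisfying `F gⱼ ≫ f = fⱼ`: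
a cocone over the diagram in `F ↓ d`.
-/

open CategoryTheory CategoryTheory.Limits Opposite

universe u

namespace CategoryTheory.CostructuredArrow

variable {C D : Type u} [SmallCategory C] [SmallCategory D] {F : C ⥤ D}

variable (F) in
def homCocone (d : D) (c : C) : Cocone (proj F d ⋙ coyoneda.obj (op c)) where
  pt := F.obj c ⟶ d
  ι :=
    { app T := TypeCat.ofHom fun x => F.map x ≫ T.hom
      naturality T T' f := by
        ext (x : c ⟶ T.left)
        change F.map (x ≫ f.left) ≫ T'.hom = F.map x ≫ T.hom
        simp }

lemma map_comp_hom_eq_of_colimit_ι_eq {d : D} {c : C} {T T' : CostructuredArrow F d}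
    {x : c ⟶ T.left} {x' : c ⟶ T'.left}
    (h : colimit.ι (proj F d ⋙ coyoneda.obj (op c)) T x =
      colimit.ι (proj F d ⋙ coyoneda.obj (op c)) T' x') :
    F.map x ≫ T.hom = F.map x' ≫ T'.hom := by
  have hT := colimit.ι_desc_apply (homCocone F d c) T
    (show (proj F d ⋙ coyoneda.obj (op c)).obj T from x)
  have hT' := colimit.ι_desc_apply (homCocone F d c) T'
    (show (proj F d ⋙ coyoneda.obj (op c)).obj T' from x')
  rw [h] at hT
  exact hT.symm.trans hT'

lemma nonempty_cocone_of_preservesLimitsOfShape {d : D} {J : Type} [SmallCategory J]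
    [PreservesLimitsOfShape Jᵒᵖ ((Functor.whiskeringLeft _ _ (Type u)).obj (proj F d) ⋙ colim)]
    (G : J ⥤ CostructuredArrow F d) : Nonempty (Cocone G) := by
  let Φ := (Functor.whiskeringLeft _ _ (Type u)).obj (proj F d) ⋙ colim
  let P : Jᵒᵖ ⥤ C ⥤ Type u := (G ⋙ proj F d).op ⋙ coyoneda
  -- under `homCocone`, `t j` corresponds to the structure morphism `(G j).hom`
  let t (j : Jᵒᵖ) : (P ⋙ Φ).obj j := colimit.ι (proj F d ⋙ P.obj j) (G.obj j.unop) (𝟙 _)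
  have ht (j j' : Jᵒᵖ) (v : j ⟶ j') : (P ⋙ Φ).map v (t j) = t j' := by
    have hw := colimit.w_apply (proj F d ⋙ P.obj j') (G.map v.unop)
      (show (proj F d ⋙ P.obj j').obj (G.obj j'.unop) from 𝟙 _)
    have hm := colimit.ι_map_apply (Functor.whiskerLeft (proj F d) (P.map v)) (G.obj j.unop)
      (show (proj F d ⋙ P.obj j).obj (G.obj j.unop) from 𝟙 _)
    refine hm.trans (Eq.trans ?_ hw)
    congr 1
    exact (Category.comp_id _).trans (Category.id_comp _).symm
  obtain ⟨T, y, hy⟩ :=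
    Types.jointly_surjective' ((preservesLimitIso Φ P).inv (Types.Limit.mk _ t ht))
  let g (j : J) : (G.obj j).left ⟶ T.left := (limit.π P (op j)).app T.left y
  have hg (j : J) : F.map (g j) ≫ T.hom = (G.obj j).hom := by
    have h1 := colimit.ι_map_apply (Functor.whiskerLeft (proj F d) (limit.π P (op j))) T y
    have h2 :=
      ConcreteCategory.congr_hom (preservesLimitIso_inv_π Φ P (op j)) (Types.Limit.mk _ t ht)
    rw [Types.Limit.π_mk, ConcreteCategory.comp_apply, ← hy] at h2
    exact (map_comp_hom_eq_of_colimit_ι_eq (h1.symm.trans h2)).trans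
      ((congrArg (· ≫ _) (F.map_id _)).trans (Category.id_comp _))
  refine ⟨⟨T, { app j := homMk (g j) (hg j), naturality j j' v := ?_ }⟩⟩
  have hw := ConcreteCategory.congr_hom (congr_app (limit.w P v.op) T.left) y
  ext
  exact hw.trans (Category.comp_id _).symm

end CategoryTheory.CostructuredArrow

namespace CategoryTheory

variable {C D : Type u} [SmallCategory C] [SmallCategory D] (F : C ⥤ D)

lemma preservesFiniteLimits_lan_of_representablyCoflat [RepresentablyCoflat F] :
    PreservesFiniteLimits (F.lan : (C ⥤ Type u) ⥤ D ⥤ Type u) :=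
  preservesFiniteLimits_of_evaluation _ fun d =>
    preservesFiniteLimits_of_natIso (lanEvaluationIsoColim _ F d).symm

lemma representablyCoflat_of_preservesFiniteLimits_lan
    [PreservesFiniteLimits (F.lan : (C ⥤ Type u) ⥤ D ⥤ Type u)] : RepresentablyCoflat F where
  filtered d := by
    have := preservesFiniteLimits_of_natIso (lanEvaluationIsoColim (Type u) F d)
    exact IsFiltered.of_cocone_nonempty.{0} _ fun G =>
      CostructuredArrow.nonempty_cocone_of_preservesLimitsOfShape G

end CategoryTheory

/-- The left Kan extension functor `Lan_F : (C ⥤ Type) ⥤ (D ⥤ Type)` along a functor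
`F : C ⥤ D` between small categories preserves finite limits if and only if the comma
category `F ↓ d` (i.e. `CostructuredArrow F d`) is filtered for every `d : D`. -/
theorem lan_preservesFiniteLimits_iff_costructuredArrow_isFiltered
    {C D : Type} [SmallCategory C] [SmallCategory D] (F : C ⥤ D) :
    Nonempty (PreservesFiniteLimits (F.lan : (C ⥤ Type) ⥤ (D ⥤ Type))) ↔
      ∀ d : D, IsFiltered (CostructuredArrow F d) :=
  ⟨fun ⟨_⟩ => (representablyCoflat_of_preservesFiniteLimits_lan F).filtered,
    fun h =>
      have : RepresentablyCoflat F := ⟨h⟩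
      ⟨preservesFiniteLimits_lan_of_representablyCoflat F⟩⟩
end

section
/- Let C, D, E be small categories and F : C ⥤ D a functor such that for every d : D the comma category F ↓ d (CostructuredArrow F d) is connected (in particular nonempty). Let X : E ⥤ Type be a functor. Writing π_C : C × E ⥤ E and π_D : D × E ⥤ E for the second projections, the left Kan extension along the product functor F × 𝟭_E : C × E ⥤ D × E of the composite π_C ⋙ X is naturally isomorphic to π_D ⋙ X. That is, Lan_{F × 𝟭_E}(π_C ⋙ X) ≅ π_D ⋙ X. -/
open CategoryTheory CategoryTheory.Limits

/-!
The comma category of `F × 𝟭 E` over `(d, e)` is `(F ↓ d) × (E ↓ e)`, and the diagram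
`(c, e') ↦ X e'` only depends on the second factor. As `F ↓ d` is connected, the projection
onto `E ↓ e` is final, and `E ↓ e` has the terminal object `𝟙 e`; so the colimit is `X e`,
i.e. `π_D ⋙ X` with the identity unit is a pointwise left Kan extension.
-/

universe v₁ v₂ v₃ v₄ u₁ u₂ u₃ u₄

namespace CategoryTheory.Functor

variable {C : Type u₁} {D : Type u₂} {E : Type u₃} {H : Type u₄}
  [Category.{v₁} C] [Category.{v₂} D] [Category.{v₃} E] [Category.{v₄} H]
  (F : C ⥤ D) (X : E ⥤ H)

noncomputable def isPointwiseLeftKanExtensionAtSndComp (d : D) (e : E)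
    [IsConnected (CostructuredArrow F d)] :
    (LeftExtension.mk (Prod.snd D E ⋙ X)
      (𝟙 (F.prod (𝟭 E) ⋙ Prod.snd D E ⋙ X))).IsPointwiseLeftKanExtensionAt (d, e) := by
  apply IsColimit.ofWhiskerEquivalence (CostructuredArrow.prodEquivalence F (𝟭 E) d e).symm
  refine (Final.isColimitWhiskerEquiv
      (Prod.snd (CostructuredArrow F d) (CostructuredArrow (𝟭 E) e)) _).symm
    (colimitOfDiagramTerminal CostructuredArrow.mkIdTerminal (CostructuredArrow.proj (𝟭 E) e ⋙ X))
    |>.ofIsoColimit (Cocone.ext (Iso.refl _) fun j => ?_)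
  change X.map ((𝟭 E).preimage j.2.hom) ≫ 𝟙 _ = 𝟙 _ ≫ X.map j.2.hom
  simpa using congrArg X.map ((𝟭 E).map_preimage j.2.hom)

noncomputable def isPointwiseLeftKanExtensionSndComp [F.Initial] :
    (LeftExtension.mk (Prod.snd D E ⋙ X)
      (𝟙 (F.prod (𝟭 E) ⋙ Prod.snd D E ⋙ X))).IsPointwiseLeftKanExtension :=
  fun ⟨d, e⟩ => isPointwiseLeftKanExtensionAtSndComp F X d e

instance isLeftKanExtension_snd_comp [F.Initial] :
    (Prod.snd D E ⋙ X).IsLeftKanExtension (𝟙 (F.prod (𝟭 E) ⋙ Prod.snd D E ⋙ X)) :=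
  (isPointwiseLeftKanExtensionSndComp F X).isLeftKanExtension

end CategoryTheory.Functor

/-- Let `F : C ⥤ D` be a functor between small categories such that every comma category
`F ↓ d` is connected, and let `X : E ⥤ Type`.  Then the left Kan extension of
`π_C ⋙ X` along `F × 𝟭 E : C × E ⥤ D × E` is naturally isomorphic to `π_D ⋙ X`,
where `π_C : C × E ⥤ E` and `π_D : D × E ⥤ E` are the second projections. -/
theorem lan_prod_id_snd_comp_iso
    {C D E : Type} [SmallCategory C] [SmallCategory D] [SmallCategory E]
    (F : C ⥤ D) (hF : ∀ d : D, IsConnected (CostructuredArrow F d)) (X : E ⥤ Type) :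
    Nonempty ((F.prod (𝟭 E)).lan.obj (CategoryTheory.Prod.snd C E ⋙ X) ≅
      CategoryTheory.Prod.snd D E ⋙ X) := by
  have : F.Initial := ⟨hF⟩
  exact ⟨Functor.leftKanExtensionUnique _ ((F.prod (𝟭 E)).lanUnit.app _) _
    (𝟙 (F.prod (𝟭 E) ⋙ CategoryTheory.Prod.snd D E ⋙ X))⟩
end

section
/- Let C be a small category, let I be a presheaf on C (an object of PSh(C) = C^op ⥤ Type), and let S : C ⥤ C be a functor equipped with an isomorphism, natural in c : C, between the presheaves yoneda(S(c)) and yoneda(c) × I (the categorical product in PSh(C)). Then the exponentiation functor (−)^I : PSh(C) ⥤ PSh(C) (the internal hom out of I in the cartesian closed category PSh(C)) is naturally isomorphic to the precomposition functor along S^op : C^op ⥤ C^op. In particular, since precomposition along S^op has a right adjoint (right Kan extension along S^op), the functor (−)^I has a right adjoint, i.e. I is a tiny object of PSh(C). -/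
/-!
Both `- ⨯ I` and left Kan extension along `S.op` preserve colimits of presheaves, and they agree
on representables: the first by hypothesis, the second because the left Kan extension of
`yoneda c` along `S.op` is `yoneda (S c)`. Hence they are isomorphic, and so are their right
adjoints, `(-)^I` and precomposition with `S.op`. The latter is a left adjoint, with right
Kan extension along `S.op` as its right adjoint.
-/

open CategoryTheory CategoryTheory.Limits MonoidalCategory

universe v u w

namespace CategoryTheory

noncomputable def prodFunctorFlipObjIsoTensorLeft {D : Type w} [Category.{v} D]
    [CartesianMonoidalCategory D] [HasBinaryProducts D] (I : D) :
    prod.functor.flip.obj I ≅ tensorLeft I :=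
  NatIso.ofComponents (F := prod.functor.flip.obj I) (G := prod.functor.obj I)
      (fun X => prod.braiding X I) (fun f => braid_natural f (𝟙 I)) ≪≫
    (CartesianMonoidalCategory.tensorLeftIsoProd I).symm

namespace Presheaf

variable {C D : Type u} [SmallCategory C] [SmallCategory D]

noncomputable def isoOpLanOfPreservesColimits (S : C ⥤ D)
    (F : (Cᵒᵖ ⥤ Type u) ⥤ (Dᵒᵖ ⥤ Type u)) [PreservesColimits F]
    (e : S ⋙ yoneda ≅ yoneda ⋙ F) : F ≅ S.op.lan :=
  have : PreservesColimits (S.op.lan : (Cᵒᵖ ⥤ Type u) ⥤ _) :=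
    (S.op.lanAdjunction (Type u)).leftAdjoint_preservesColimits
  let e' : S ⋙ uliftYoneda.{u} ≅ uliftYoneda.{u} ⋙ F :=
    Functor.isoWhiskerLeft S uliftYonedaIsoYoneda ≪≫ e ≪≫
      Functor.isoWhiskerRight uliftYonedaIsoYoneda.symm F
  uniqueExtensionAlongULiftYoneda.{u, u, u, u, u + 1} F e' ≪≫
    (uniqueExtensionAlongULiftYoneda.{u, u, u, u, u + 1} S.op.lan
      (compULiftYonedaIsoULiftYonedaCompLan.{u} S)).symm

noncomputable def tensorLeftAdjPrecompOfYonedaIsoProd (I : Cᵒᵖ ⥤ Type u) (S : C ⥤ C)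
    (h : S ⋙ yoneda ≅ yoneda ⋙ prod.functor.flip.obj I) :
    tensorLeft I ⊣ (Functor.whiskeringLeft Cᵒᵖ Cᵒᵖ (Type u)).obj S.op :=
  (S.op.lanAdjunction (Type u)).ofNatIsoLeft
    (isoOpLanOfPreservesColimits S (tensorLeft I)
      (h ≪≫ Functor.isoWhiskerLeft yoneda (prodFunctorFlipObjIsoTensorLeft I))).symm

noncomputable def ihomIsoPrecompOfYonedaIsoProd (I : Cᵒᵖ ⥤ Type u) (S : C ⥤ C)
    (h : S ⋙ yoneda ≅ yoneda ⋙ prod.functor.flip.obj I) :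
    ihom I ≅ (Functor.whiskeringLeft Cᵒᵖ Cᵒᵖ (Type u)).obj S.op :=
  (ihom.adjunction I).rightAdjointUniq (tensorLeftAdjPrecompOfYonedaIsoProd I S h)

end Presheaf

end CategoryTheory

/-- Let `C` be a small category, `I` a presheaf on `C`, and `S : C ⥤ C` a functor with a
natural isomorphism `yoneda (S c) ≅ yoneda c ⨯ I`.  Then the exponentiation functor
`(−)^I` on presheaves is naturally isomorphic to precomposition along `S.op`, and in
particular `(−)^I` has a right adjoint, i.e. `I` is a tiny object of `PSh(C)`. -/
theorem exp_iso_precomp_of_yoneda_iso_prod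
    {C : Type} [SmallCategory C] (I : Cᵒᵖ ⥤ Type) (S : C ⥤ C)
    (h : S ⋙ yoneda ≅ yoneda ⋙ prod.functor.flip.obj I) :
    Nonempty ((ihom I : (Cᵒᵖ ⥤ Type) ⥤ (Cᵒᵖ ⥤ Type)) ≅
        (Functor.whiskeringLeft Cᵒᵖ Cᵒᵖ Type).obj S.op) ∧
      (ihom I : (Cᵒᵖ ⥤ Type) ⥤ (Cᵒᵖ ⥤ Type)).IsLeftAdjoint := by
  let iso := Presheaf.ihomIsoPrecompOfYonedaIsoProd I S h
  have : ((Functor.whiskeringLeft Cᵒᵖ Cᵒᵖ Type).obj S.op).IsLeftAdjoint :=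
    (S.op.ranAdjunction Type).isLeftAdjoint
  exact ⟨⟨iso⟩, Functor.isLeftAdjoint_of_iso iso.symm⟩
end
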